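/- Let B be a 3×3 real symmetric positive-definite matrix and let h be an isotropic map from 3×3 real symmetric positive-definite matrices to 3×3 real symmetric matrices. Then the product h(B) * B is a symmetric matrix: (h(B) * B)ᵀ = h(B) * B. (Hence the Cauchy stress tensor σ/ρ = h(B) B is symmetric.) -/

import Mathlib

/-!
Write `B = Qᵀ D Q` with `Q` a rotation and `D` diagonal. A half-turn about a coordinate axis is
a diagonal rotation, so it fixes `D`, and by isotropy it also fixes `h D` under conjugation. In
dimension at least three every off-diagonal entry of a matrix changes sign under one of these
half-turns, so `h D` is diagonal and commutes with `D`; conjugating back, `h B` commutes with `B`.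
-/

open Matrix

theorem Pi.mulSingle_mul_self_eq_one {ι M : Type*} [DecidableEq ι] [MulOneClass M] {x : M}
    (hx : x * x = 1) (a : ι) : (Pi.mulSingle a x : ι → M) * Pi.mulSingle a x = 1 := by
  rw [← Pi.mulSingle_mul, hx, Pi.mulSingle_one]

variable {n : Type*} [DecidableEq n]

/-- For `a ≠ c`, the rotation by `π` in the `(a, c)` coordinate plane. -/
def halfTurn (a c : n) : Matrix n n ℝ :=
  diagonal (Pi.mulSingle a (-1) * Pi.mulSingle c (-1) : n → ℝ)

theorem halfTurn_sign_mul_self (a c : n) :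
    (Pi.mulSingle a (-1) * Pi.mulSingle c (-1) : n → ℝ) *
      (Pi.mulSingle a (-1) * Pi.mulSingle c (-1)) = 1 := by
  rw [mul_mul_mul_comm, Pi.mulSingle_mul_self_eq_one (by norm_num) a,
    Pi.mulSingle_mul_self_eq_one (by norm_num) c, one_mul]

variable [Fintype n]

section SignDiagonal

variable {R : Type*} [CommRing R]

theorem transpose_diagonal_mul_mul_diagonal_apply (s : n → R) (X : Matrix n n R) (a b : n) :
    ((diagonal s)ᵀ * X * diagonal s) a b = s a * X a b * s b := by
  rw [diagonal_transpose, mul_diagonal, diagonal_mul]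

theorem det_diagonal_mulSingle (a : n) (x : R) :
    (diagonal (Pi.mulSingle a x : n → R)).det = x := by
  rw [det_diagonal, Finset.prod_pi_mulSingle', if_pos (Finset.mem_univ a)]

variable {s : n → R}

theorem diagonal_mul_diagonal_self (hs : s * s = 1) : diagonal s * diagonal s = 1 := by
  rw [diagonal_mul_diagonal', ← diagonal_one]
  exact congrArg diagonal hs

theorem transpose_diagonal_mul_diagonal_self (hs : s * s = 1) :
    (diagonal s)ᵀ * diagonal s = 1 := by
  rw [diagonal_transpose, diagonal_mul_diagonal_self hs]

theorem transpose_diagonal_mul_diagonal_mul_diagonal (hs : s * s = 1) (d : n → R) :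
    (diagonal s)ᵀ * diagonal d * diagonal s = diagonal d := by
  rw [diagonal_transpose, (commute_diagonal s d).eq, Matrix.mul_assoc,
    diagonal_mul_diagonal_self hs, Matrix.mul_one]

end SignDiagonal

theorem transpose_halfTurn_mul_self (a c : n) : (halfTurn a c)ᵀ * halfTurn a c = 1 :=
  transpose_diagonal_mul_diagonal_self (halfTurn_sign_mul_self a c)

theorem det_halfTurn (a c : n) : (halfTurn a c).det = 1 := by
  simp [halfTurn, Finset.prod_mul_distrib]

theorem transpose_halfTurn_mul_diagonal_mul_halfTurn (a c : n) (d : n → ℝ) :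
    (halfTurn a c)ᵀ * diagonal d * halfTurn a c = diagonal d :=
  transpose_diagonal_mul_diagonal_mul_diagonal (halfTurn_sign_mul_self a c) d

theorem isDiag_of_forall_halfTurn_conj (hn : 2 < Fintype.card n) {X : Matrix n n ℝ}
    (hX : ∀ a c : n, (halfTurn a c)ᵀ * X * halfTurn a c = X) : X.IsDiag := by
  intro a b hab
  obtain ⟨c, hca, hcb⟩ := Cardinal.exists_ne_ne_of_three_le (by simp; omega) a b
  have hab' := congrFun₂ (hX a c) a b
  rw [halfTurn, transpose_diagonal_mul_mul_diagonal_apply] at hab'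
  simp [hab, hca.symm, hcb.symm] at hab'
  linarith

theorem Matrix.IsHermitian.exists_det_eq_one_diagonalization [Nonempty n] {A : Matrix n n ℝ}
    (hA : A.IsHermitian) :
    ∃ Q : Matrix n n ℝ, Qᵀ * Q = 1 ∧ Q.det = 1 ∧ A = Qᵀ * diagonal hA.eigenvalues * Q := by
  set P : Matrix n n ℝ := (hA.eigenvectorUnitary : Matrix n n ℝ)ᵀ
  have hP : Pᵀ * P = 1 := by
    rw [transpose_transpose, ← mem_orthogonalGroup_iff]; exact hA.eigenvectorUnitary.2
  have hAP : A = Pᵀ * diagonal hA.eigenvalues * P := by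
    simpa [RCLike.ofReal_real_eq_id, star_eq_conjTranspose, P] using hA.spectral_theorem
  have hdetP : P.det * P.det = 1 := by
    simpa using congrArg det hP
  -- a reflection in one coordinate axis fixes the sign of `det P` and commutes with the diagonal
  have hs := Pi.mulSingle_mul_self_eq_one hdetP (Classical.arbitrary n)
  set S := diagonal (Pi.mulSingle (Classical.arbitrary n) P.det)
  have hS : Sᵀ * S = 1 := transpose_diagonal_mul_diagonal_self hs
  refine ⟨S * P, ?_, by rw [det_mul, det_diagonal_mulSingle, hdetP], ?_⟩
  · rw [transpose_mul, Matrix.mul_assoc, ← Matrix.mul_assoc Sᵀ, hS, Matrix.one_mul, hP]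
  · conv_lhs => rw [hAP, ← transpose_diagonal_mul_diagonal_mul_diagonal hs hA.eigenvalues]
    simp only [transpose_mul, Matrix.mul_assoc, S]

theorem Commute.transpose_mul_mul {R : Type*} [Semiring R] {Q X Y : Matrix n n R}
    (hQ : Q * Qᵀ = 1) (hXY : Commute X Y) : Commute (Qᵀ * X * Q) (Qᵀ * Y * Q) := by
  have hconj : ∀ U V : Matrix n n R, Qᵀ * U * Q * (Qᵀ * V * Q) = Qᵀ * (U * V) * Q := by
    intro U V
    simp only [Matrix.mul_assoc]
    rw [← Matrix.mul_assoc Q, hQ, Matrix.one_mul]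
  rw [Commute, SemiconjBy, hconj, hconj, hXY.eq]

def IsIsotropic (h : Matrix n n ℝ → Matrix n n ℝ) : Prop :=
  ∀ M : Matrix n n ℝ, M.PosDef → ∀ R : Matrix n n ℝ, Rᵀ * R = 1 → R.det = 1 →
    h (Rᵀ * M * R) = Rᵀ * h M * R

theorem IsIsotropic.isDiag_apply_diagonal (hn : 2 < Fintype.card n)
    {h : Matrix n n ℝ → Matrix n n ℝ} (hh : IsIsotropic h) {d : n → ℝ} (hd : ∀ i, 0 < d i) :
    (h (diagonal d)).IsDiag :=
  isDiag_of_forall_halfTurn_conj hn fun a c => by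
    have hfix := hh _ (posDef_diagonal_iff.2 hd) (halfTurn a c) (transpose_halfTurn_mul_self a c)
      (det_halfTurn a c)
    rw [transpose_halfTurn_mul_diagonal_mul_halfTurn] at hfix
    exact hfix.symm

theorem IsIsotropic.commute_apply_self (hn : 2 < Fintype.card n)
    {h : Matrix n n ℝ → Matrix n n ℝ} (hh : IsIsotropic h) {B : Matrix n n ℝ} (hB : B.PosDef) :
    Commute (h B) B := by
  have : Nonempty n := Fintype.card_pos_iff.mp (by omega)
  obtain ⟨Q, hQ, hdet, hBQ⟩ := hB.isHermitian.exists_det_eq_one_diagonalization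
  set d := hB.isHermitian.eigenvalues
  have hd : ∀ i, 0 < d i := hB.eigenvalues_pos
  clear_value d
  subst hBQ
  rw [hh _ (posDef_diagonal_iff.2 hd) Q hQ hdet]
  refine Commute.transpose_mul_mul (mul_eq_one_comm.mp hQ) ?_
  rw [← (hh.isDiag_apply_diagonal hn hd).diagonal_diag]
  exact commute_diagonal _ _

/-- If `h` is an isotropic map from symmetric positive-definite `3×3` real matrices to
symmetric matrices, then `h(B) * B` is symmetric (hence the Cauchy stress `σ/ρ = h(B) B`
is symmetric). -/
theorem h_mul_B_symmetric
    (B : Matrix (Fin 3) (Fin 3) ℝ) (hB : B.PosDef)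
    (h : Matrix (Fin 3) (Fin 3) ℝ → Matrix (Fin 3) (Fin 3) ℝ)
    (hsym : ∀ M : Matrix (Fin 3) (Fin 3) ℝ, M.PosDef → (h M)ᵀ = h M)
    (hiso : ∀ M : Matrix (Fin 3) (Fin 3) ℝ, M.PosDef →
      ∀ R : Matrix (Fin 3) (Fin 3) ℝ, Rᵀ * R = 1 → R.det = 1 →
        h (Rᵀ * M * R) = Rᵀ * h M * R) :
    (h B * B)ᵀ = h B * B := by
  have hBsymm : Bᵀ = B := (isHermitian_iff_isSymm.mp hB.isHermitian).eq
  rw [transpose_mul, hBsymm, hsym B hB]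
  exact ((show IsIsotropic h from hiso).commute_apply_self (by simp) hB).eq.symm
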